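/- arXiv:math/0403221 — 2 statements merged into one kernel-verified Lean document; each statement's English description precedes it below -/
import Mathlib

section
/- On ℝ⁴ with Euclidean metric, for any smooth function w, the fully non-linear expression e^{4w}σ₂(A_{e^{2w}g₀}) = (Δw)² − ‖∇²w‖² + 2∇²w(∇w,∇w) + ‖∇w‖²Δw equals the divergence δ((Δw + ‖∇w‖² − ∇²w)dw); explicitly, (Δw)² − ‖∇²w‖² + 2∇²w(∇w,∇w) + ‖∇w‖²Δw = Σᵢ ∂ᵢ[(Δw + ‖∇w‖²)∂ᵢw − Σⱼ (∂ᵢ∂ⱼw)(∂ⱼw)]. -/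
open MeasureTheory

/-- The Euclidean Laplacian of a function on `ℝⁿ`. -/
noncomputable def lap {n : ℕ} (f : EuclideanSpace ℝ (Fin n) → ℝ) :
    EuclideanSpace ℝ (Fin n) → ℝ :=
  fun x => ∑ i, fderiv ℝ (fun y => fderiv ℝ f y (EuclideanSpace.single i 1)) x
    (EuclideanSpace.single i 1)

/-- The average of `F` over the sphere of radius `r` centered at `c`,
with respect to the `(n-1)`-dimensional Hausdorff (surface) measure. -/
noncomputable def sphereAvg {n : ℕ} (c : EuclideanSpace ℝ (Fin n)) (r : ℝ)
    (F : EuclideanSpace ℝ (Fin n) → ℝ) : ℝ :=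
  ⨍ x in Metric.sphere c r, F x ∂(μH[(n : ℝ) - 1])

/-- The constant `Cₙ = 1/(((n-2)!!)² |S^{n-1}|)`. -/
noncomputable def Cconst (n : ℕ) : ℝ :=
  1 / (((Nat.doubleFactorial (n - 2) : ℝ)) ^ 2 *
    (μH[(n : ℝ) - 1] (Metric.sphere (0 : EuclideanSpace ℝ (Fin n)) 1)).toReal)

/-- The partial derivative `∂ᵢ f` on `ℝⁿ`. -/
noncomputable def pd {n : ℕ} (i : Fin n) (f : EuclideanSpace ℝ (Fin n) → ℝ) :
    EuclideanSpace ℝ (Fin n) → ℝ :=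
  fun x => fderiv ℝ f x (EuclideanSpace.single i 1)

section aux
variable {n : ℕ}

lemma pd_smooth {f : EuclideanSpace ℝ (Fin n) → ℝ} (hf : ContDiff ℝ (⊤ : ℕ∞) f) (i : Fin n) :
    ContDiff ℝ (⊤ : ℕ∞) (pd i f) :=
  (hf.fderiv_right (by simp)).clm_apply contDiff_const

lemma pd_diff {f : EuclideanSpace ℝ (Fin n) → ℝ} (hf : ContDiff ℝ (⊤ : ℕ∞) f) (i : Fin n)
    (x : EuclideanSpace ℝ (Fin n)) : DifferentiableAt ℝ (pd i f) x :=
  ((pd_smooth hf i).differentiable (by simp)).differentiableAt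

lemma pd_comm {f : EuclideanSpace ℝ (Fin n) → ℝ} (hf : ContDiff ℝ (⊤ : ℕ∞) f) (i j : Fin n)
    (x : EuclideanSpace ℝ (Fin n)) : pd i (pd j f) x = pd j (pd i f) x := by
  have hd : ∀ y, HasFDerivAt f (fderiv ℝ f y) y := fun y =>
    (hf.differentiable (by simp) y).hasFDerivAt
  have h2 : HasFDerivAt (fderiv ℝ f) (fderiv ℝ (fderiv ℝ f) x) x :=
    (((hf.fderiv_right (m := (⊤ : ℕ∞)) (by simp)).differentiable (by simp)) x).hasFDerivAt
  have key : ∀ a b : Fin n, pd a (pd b f) x =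
      fderiv ℝ (fderiv ℝ f) x (EuclideanSpace.single a 1) (EuclideanSpace.single b 1) := by
    intro a b
    have hcomp : HasFDerivAt (fun y => fderiv ℝ f y (EuclideanSpace.single b 1))
        ((ContinuousLinearMap.apply ℝ ℝ (EuclideanSpace.single b 1)).comp
          (fderiv ℝ (fderiv ℝ f) x)) x := by
      simpa [Function.comp_def] using
        ((ContinuousLinearMap.apply ℝ ℝ (EuclideanSpace.single b 1)).hasFDerivAt).comp x h2
    show fderiv ℝ (fun y => fderiv ℝ f y (EuclideanSpace.single b 1)) x (EuclideanSpace.single a 1) = _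
    rw [hcomp.fderiv]
    simp
  rw [key i j, key j i]
  exact second_derivative_symmetric hd h2 _ _

lemma pd_add {f g : EuclideanSpace ℝ (Fin n) → ℝ} {x} (hf : DifferentiableAt ℝ f x)
    (hg : DifferentiableAt ℝ g x) (i : Fin n) :
    pd i (fun y => f y + g y) x = pd i f x + pd i g x := by
  simp [pd, fderiv_fun_add hf hg]

lemma pd_sub {f g : EuclideanSpace ℝ (Fin n) → ℝ} {x} (hf : DifferentiableAt ℝ f x)
    (hg : DifferentiableAt ℝ g x) (i : Fin n) :
    pd i (fun y => f y - g y) x = pd i f x - pd i g x := by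
  simp [pd, fderiv_fun_sub hf hg]

lemma pd_mul {f g : EuclideanSpace ℝ (Fin n) → ℝ} {x} (hf : DifferentiableAt ℝ f x)
    (hg : DifferentiableAt ℝ g x) (i : Fin n) :
    pd i (fun y => f y * g y) x = pd i f x * g x + f x * pd i g x := by
  simp [pd, fderiv_fun_mul hf hg]
  ring

lemma pd_sum {m : ℕ} {f : Fin m → EuclideanSpace ℝ (Fin n) → ℝ} {x}
    (hf : ∀ j, DifferentiableAt ℝ (f j) x) (i : Fin n) :
    pd i (fun y => ∑ j, f j y) x = ∑ j, pd i (f j) x := by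
  simp [pd, fderiv_fun_sum (fun j _ => hf j)]

lemma pd_sq {f : EuclideanSpace ℝ (Fin n) → ℝ} {x} (hf : DifferentiableAt ℝ f x) (i : Fin n) :
    pd i (fun y => f y ^ 2) x = 2 * f x * pd i f x := by
  have : (fun y => f y ^ 2) = fun y => f y * f y := by funext y; ring
  rw [this, pd_mul hf hf]; ring

end aux

/-- The divergence structure of `e^{4w}σ₂` on `ℝ⁴`:
`(Δw)² − ‖∇²w‖² + 2∇²w(∇w,∇w) + ‖∇w‖²Δw = Σᵢ ∂ᵢ[(Δw + ‖∇w‖²)∂ᵢw − Σⱼ (∂ᵢ∂ⱼw)(∂ⱼw)]`. -/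
theorem stmt_16 (w : EuclideanSpace ℝ (Fin 4) → ℝ) (hw : ContDiff ℝ (⊤ : ℕ∞) w)
    (x : EuclideanSpace ℝ (Fin 4)) :
    (lap w x) ^ 2 - (∑ i, ∑ j, (pd i (pd j w) x) ^ 2)
        + 2 * (∑ i, ∑ j, pd i (pd j w) x * pd i w x * pd j w x)
        + (∑ i, (pd i w x) ^ 2) * lap w x
      = ∑ i, pd i (fun y =>
          (lap w y + ∑ j, (pd j w y) ^ 2) * pd i w y
            - ∑ j, pd i (pd j w) y * pd j w y) x := by
  have hw1 : ∀ i : Fin 4, ContDiff ℝ (⊤ : ℕ∞) (pd i w) := fun i => pd_smooth hw i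
  have hw2 : ∀ i j : Fin 4, ContDiff ℝ (⊤ : ℕ∞) (pd i (pd j w)) := fun i j => pd_smooth (hw1 j) i
  have hlapeq : lap w = fun y => ∑ i, pd i (pd i w) y := rfl
  have hlap : ContDiff ℝ (⊤ : ℕ∞) (lap w) := by
    rw [hlapeq]; exact ContDiff.sum fun i _ => hw2 i i
  have hS : ContDiff ℝ (⊤ : ℕ∞) (fun y => ∑ j, (pd j w y) ^ 2) :=
    ContDiff.sum fun j _ => (hw1 j).pow 2
  have dA : DifferentiableAt ℝ (fun y => lap w y + ∑ j, (pd j w y) ^ 2) x :=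
    (hlap.differentiable (by simp) x).add (hS.differentiable (by simp) x)
  have key : ∀ i : Fin 4, pd i (fun y =>
      (lap w y + ∑ j, (pd j w y) ^ 2) * pd i w y
        - ∑ j, pd i (pd j w) y * pd j w y) x
    = ((∑ j, pd i (pd j (pd j w)) x) + ∑ j, 2 * pd j w x * pd i (pd j w) x) * pd i w x
      + (lap w x + ∑ j, (pd j w x) ^ 2) * pd i (pd i w) x
      - ∑ j, (pd i (pd i (pd j w)) x * pd j w x
          + pd i (pd j w) x * pd i (pd j w) x) := by
    intro i
    rw [pd_sub (dA.fun_mul (pd_diff hw i x))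
      (DifferentiableAt.fun_sum fun j _ => (pd_diff (hw1 j) i x).fun_mul (pd_diff hw j x)),
      pd_mul dA (pd_diff hw i x),
      pd_add (hlap.differentiable (by simp) x) (hS.differentiable (by simp) x),
      pd_sum (fun j => (pd_diff (hw1 j) i x).fun_mul (pd_diff hw j x))]
    have h1 : pd i (lap w) x = ∑ j, pd i (pd j (pd j w)) x := by
      rw [hlapeq, pd_sum (fun j => pd_diff (hw1 j) j x)]
    have h2 : pd i (fun y => ∑ j, (pd j w y) ^ 2) x = ∑ j, 2 * pd j w x * pd i (pd j w) x := by
      rw [pd_sum (f := fun j => fun y => (pd j w y) ^ 2) (fun j => (pd_diff hw j x).fun_pow 2)]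
      exact Finset.sum_congr rfl fun j _ => pd_sq (pd_diff hw j x) i
    have h3 : ∀ j : Fin 4, pd i (fun y => pd i (pd j w) y * pd j w y) x
        = pd i (pd i (pd j w)) x * pd j w x + pd i (pd j w) x * pd i (pd j w) x := by
      intro j
      rw [pd_mul (pd_diff (hw1 j) i x) (pd_diff hw j x)]
    rw [h1, h2]
    rw [Finset.sum_congr rfl fun j _ => h3 j]
  rw [Finset.sum_congr rfl fun i _ => key i]
  have cancel : ∑ i : Fin 4, ∑ j : Fin 4, pd i (pd i (pd j w)) x * pd j w x
      = ∑ i : Fin 4, ∑ j : Fin 4, pd i (pd j (pd j w)) x * pd i w x := by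
    have h1 : ∀ i j : Fin 4, pd i (pd i (pd j w)) x = pd j (pd i (pd i w)) x := by
      intro i j
      have e1 : pd i (pd j w) = pd j (pd i w) := funext fun y => pd_comm hw i j y
      calc pd i (pd i (pd j w)) x = pd i (pd j (pd i w)) x := by rw [e1]
        _ = pd j (pd i (pd i w)) x := pd_comm (hw1 i) i j x
    calc ∑ i : Fin 4, ∑ j : Fin 4, pd i (pd i (pd j w)) x * pd j w x
        = ∑ i : Fin 4, ∑ j : Fin 4, pd j (pd i (pd i w)) x * pd j w x :=
          Finset.sum_congr rfl fun i _ => Finset.sum_congr rfl fun j _ => by rw [h1]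
      _ = ∑ j : Fin 4, ∑ i : Fin 4, pd j (pd i (pd i w)) x * pd j w x := Finset.sum_comm
      _ = ∑ i : Fin 4, ∑ j : Fin 4, pd i (pd j (pd j w)) x * pd i w x := rfl
  have elap : ∑ i : Fin 4, pd i (pd i w) x = lap w x := rfl
  simp only [Finset.sum_sub_distrib, Finset.sum_add_distrib, add_mul, Finset.sum_mul,
    ← Finset.mul_sum]
  rw [cancel, elap]
  have e3 : ∑ i : Fin 4, ∑ j : Fin 4, 2 * pd j w x * pd i (pd j w) x * pd i w x
      = 2 * ∑ i : Fin 4, ∑ j : Fin 4, pd i (pd j w) x * pd i w x * pd j w x := by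
    simp only [Finset.mul_sum]
    exact Finset.sum_congr rfl fun i _ => Finset.sum_congr rfl fun j _ => by ring
  have e4 : ∑ i : Fin 4, ∑ j : Fin 4, pd i (pd j w) x * pd i (pd j w) x
      = ∑ i : Fin 4, ∑ j : Fin 4, (pd i (pd j w) x) ^ 2 :=
    Finset.sum_congr rfl fun i _ => Finset.sum_congr rfl fun j _ => (sq _).symm
  have e5 : ∑ i : Fin 4, ∑ j : Fin 4, pd j w x ^ 2 * pd i (pd i w) x
      = ∑ i : Fin 4, pd i w x ^ 2 * lap w x := by
    calc ∑ i : Fin 4, ∑ j : Fin 4, pd j w x ^ 2 * pd i (pd i w) x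
        = ∑ j : Fin 4, ∑ i : Fin 4, pd j w x ^ 2 * pd i (pd i w) x := Finset.sum_comm
      _ = ∑ j : Fin 4, pd j w x ^ 2 * lap w x := by
          refine Finset.sum_congr rfl fun j _ => ?_
          rw [← Finset.mul_sum, elap]
  rw [e3, e4, e5]
  ring
end

section
/- Let F : [1,∞) → (0,∞) be differentiable and nondecreasing, and suppose there are constants C > 0 and 0 < α ≤ 1/2 such that α F(r) ≤ C F'(r)^{(3+α)/(4+α)} · r^{3/(4+α)} for all r ≥ 1. Then integrating the resulting differential inequality (−F(r)^{−1/(3+α)})' ≥ c α^{(7+2α)/(3+α)} (r^{α/(3+α)})' (for an appropriate constant c > 0 depending on C) over [1,b] and letting b → ∞ yields a contradiction; hence no such positive F exists. Formally: there is no differentiable nondecreasing F : [1,∞) → (0,∞) satisfying α F(r) ≤ C F'(r)^{(3+α)/(4+α)} r^{3/(4+α)} for all r ≥ 1. -/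
/-!
Raising the inequality to the power `(4+α)/(3+α)` turns it into the superlinear differential
inequality `F' ≥ κ r^{-s} F^{1+γ}` with `γ = 1/(3+α)` and `s = 3/(3+α) < 1`. Then
`-F^{-γ}` grows at least like a positive multiple of `r^{1-s}`, hence tends to `+∞`,
which is impossible for a negative function.
-/

open Filter Set

theorem tendsto_atTop_of_hasDerivAt_ge {a : ℝ} {f φ f' φ' : ℝ → ℝ}
    (hf : ∀ r ≥ a, HasDerivAt f (f' r) r) (hφ : ∀ r ≥ a, HasDerivAt φ (φ' r) r)
    (hle : ∀ r ≥ a, φ' r ≤ f' r) (hφ_top : Tendsto φ atTop atTop) :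
    Tendsto f atTop atTop := by
  have hd : ∀ r ≥ a, HasDerivAt (f - φ) (f' r - φ' r) r := fun r hr => (hf r hr).sub (hφ r hr)
  have hmono : MonotoneOn (f - φ) (Ici a) := by
    refine monotoneOn_of_hasDerivWithinAt_nonneg (convex_Ici a)
      (fun r hr => (hd r hr).continuousAt.continuousWithinAt)
      (fun r hr => (hd r (interior_subset hr)).hasDerivWithinAt) fun r hr => ?_
    exact sub_nonneg.2 (hle r (interior_subset hr))
  refine tendsto_atTop_mono' _ ?_ (tendsto_atTop_add_const_right _ (f a - φ a) hφ_top)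
  filter_upwards [eventually_ge_atTop a] with r hr
  have := hmono self_mem_Ici hr hr
  simp only [Pi.sub_apply] at this
  linarith

theorem Real.mul_rpow_mul_rpow_le_of_mul_le_mul_rpow_mul_rpow {a c p t x y r : ℝ}
    (ha : 0 ≤ a) (hc : 0 < c) (hp : 0 < p) (hx : 0 ≤ x) (hy : 0 ≤ y) (hr : 0 < r)
    (h : a * y ≤ c * x ^ p * r ^ t) :
    (a / c) ^ p⁻¹ * r ^ (-(t / p)) * y ^ p⁻¹ ≤ x := by
  have hbase : a / c * r ^ (-t) * y ≤ x ^ p := by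
    have hrt : 0 < c * r ^ t := mul_pos hc (Real.rpow_pos_of_pos hr t)
    calc a / c * r ^ (-t) * y = a * y / (c * r ^ t) := by rw [Real.rpow_neg hr.le]; ring
      _ ≤ x ^ p := by rw [div_le_iff₀ hrt]; linarith
  have := (Real.rpow_inv_le_iff_of_pos (by positivity) hx hp).2 hbase
  rwa [Real.mul_rpow (by positivity) hy, Real.mul_rpow (by positivity) (by positivity),
    ← Real.rpow_mul hr.le, neg_mul, ← div_eq_mul_inv] at this

theorem false_of_mul_rpow_le_deriv {a κ γ s : ℝ} (ha : 0 < a) (hκ : 0 < κ) (hγ : 0 < γ)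
    (hs : s < 1) {F F' : ℝ → ℝ} (hF_pos : ∀ r ≥ a, 0 < F r)
    (hF : ∀ r ≥ a, HasDerivAt F (F' r) r)
    (hode : ∀ r ≥ a, κ * r ^ (-s) * F r ^ (1 + γ) ≤ F' r) : False := by
  have hG : ∀ r ≥ a, HasDerivAt (fun r => -F r ^ (-γ)) (γ * (F' r * F r ^ (-γ - 1))) r :=
    fun r hr => ((hF r hr).rpow_const (Or.inl (hF_pos r hr).ne')).neg.congr_deriv (by ring)
  have hφ : ∀ r ≥ a,
      HasDerivAt (fun r => κ * γ / (1 - s) * r ^ (1 - s)) (γ * (κ * r ^ (-s))) r := by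
    intro r hr
    refine ((Real.hasDerivAt_rpow_const (Or.inl (ha.trans_le hr).ne')).const_mul _).congr_deriv ?_
    field_simp [(sub_pos.2 hs).ne']
    ring_nf
  have hle : ∀ r ≥ a, γ * (κ * r ^ (-s)) ≤ γ * (F' r * F r ^ (-γ - 1)) := by
    intro r hr
    have hFr := hF_pos r hr
    have hcancel : F r ^ (1 + γ) * F r ^ (-γ - 1) = 1 := by
      rw [← Real.rpow_add hFr, show 1 + γ + (-γ - 1) = 0 by ring, Real.rpow_zero]
    refine mul_le_mul_of_nonneg_left ?_ hγ.le
    calc κ * r ^ (-s) = κ * r ^ (-s) * F r ^ (1 + γ) * F r ^ (-γ - 1) := by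
          rw [mul_assoc _ (F r ^ _), hcancel, mul_one]
      _ ≤ F' r * F r ^ (-γ - 1) := by gcongr; exact hode r hr
  have hφ_top : Tendsto (fun r : ℝ => κ * γ / (1 - s) * r ^ (1 - s)) atTop atTop :=
    (tendsto_rpow_atTop (sub_pos.2 hs)).const_mul_atTop (by have := sub_pos.2 hs; positivity)
  obtain ⟨r, hr_pos, hr⟩ := ((tendsto_atTop_of_hasDerivAt_ge hG hφ hle hφ_top).eventually_gt_atTop
    0 |>.and (eventually_ge_atTop a)).exists
  have := Real.rpow_pos_of_pos (hF_pos r hr) (-γ)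
  linarith

theorem stmt_18_general (C α : ℝ) (hC : 0 < C) (hα : 0 < α)
    (F F' : ℝ → ℝ)
    (hFpos : ∀ r ≥ (1 : ℝ), 0 < F r)
    (hF' : ∀ r ≥ (1 : ℝ), HasDerivAt F (F' r) r)
    (hmono : ∀ r ≥ (1 : ℝ), 0 ≤ F' r)
    (hineq : ∀ r ≥ (1 : ℝ),
      α * F r ≤ C * (F' r) ^ ((3 + α) / (4 + α)) * r ^ ((3 : ℝ) / (4 + α))) :
    False := by
  have hp : 0 < (3 + α) / (4 + α) := by positivity
  have hp_inv : ((3 + α) / (4 + α))⁻¹ = 1 + 1 / (3 + α) := by field_simp; ring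
  have hs : (3 : ℝ) / (4 + α) / ((3 + α) / (4 + α)) < 1 := by
    rw [div_lt_one hp]; gcongr; linarith
  refine false_of_mul_rpow_le_deriv (κ := (α / C) ^ ((3 + α) / (4 + α))⁻¹) (γ := 1 / (3 + α))
    one_pos (Real.rpow_pos_of_pos (div_pos hα hC) _) (by positivity) hs hFpos hF' fun r hr => ?_
  rw [← hp_inv]
  exact Real.mul_rpow_mul_rpow_le_of_mul_le_mul_rpow_mul_rpow hα.le hC hp (hmono r hr)
    (hFpos r hr).le (one_pos.trans_le hr) (hineq r hr)

/-- There is no positive nondecreasing differentiable `F` on `[1,∞)` satisfying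
`α F(r) ≤ C F'(r)^{(3+α)/(4+α)} r^{3/(4+α)}` with `0 < α ≤ 1/2`. -/
theorem stmt_18 (C α : ℝ) (hC : 0 < C) (hα : 0 < α) (hα' : α ≤ 1 / 2)
    (F F' : ℝ → ℝ)
    (hFpos : ∀ r ≥ (1 : ℝ), 0 < F r)
    (hF' : ∀ r ≥ (1 : ℝ), HasDerivAt F (F' r) r)
    (hmono : ∀ r ≥ (1 : ℝ), 0 ≤ F' r)
    (hineq : ∀ r ≥ (1 : ℝ),
      α * F r ≤ C * (F' r) ^ ((3 + α) / (4 + α)) * r ^ ((3 : ℝ) / (4 + α))) :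
    False :=
  stmt_18_general C α hC hα F F' hFpos hF' hmono hineq
end
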